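/- Suppose 1 < p ≤ 2, X is a Banach space and T : L_p → X is a gentle-narrow bounded linear operator with p-gentle function φ. Then for every ε > 0, every M > 0 and every measurable A ⊆ [0,1] there exists x ∈ L_p vanishing a.e. outside A such that: (i) ‖x‖_p = μ(A)^{1/p}; (ii) ‖x − x^M‖_p ≤ φ(M)·μ(A)^{1/p}; (iii) ‖Tx‖ ≤ ε; and additionally (iv) ∫_{[0,1]} x dμ = 0. -/

import Mathlib

/-!
Cut `A` into `n` pieces of measure at most `1 / n` and take gentle witnesses `xᵢ` on them with
`‖T xᵢ‖ ≤ ε / (2n)`. As the pieces are disjoint, every sum of the `xᵢ` with signs (even signs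
varying from point to point) has the norm and the truncation error required on `A`. Choose
constant signs `θᵢ` greedily on all pieces except the one, `j`, whose mean is largest in absolute
value, so that `|∑ θᵢ ∫ xᵢ| ≤ |∫ xⱼ|`; then negate `xⱼ` outside an interval `(0, r]`, with `r`
given by the intermediate value theorem, to cancel this sum. Only the modified `xⱼ` escapes the
narrowness estimate, and `‖T‖ ‖xⱼ‖ ≤ ‖T‖ n^(-1/p)` is small for large `n`.
-/

open MeasureTheory Set Filter Topology
open scoped ENNReal NNReal

/-- Lebesgue measure on `[0,1]`. -/
noncomputable def μ01 : Measure ℝ := volume.restrict (Set.Icc 0 1)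

/-- The `M`-truncation of a function `f`. -/
noncomputable def trunc (f : ℝ → ℝ) (M : ℝ) : ℝ → ℝ :=
  fun t => if |f t| ≤ M then f t else M * Real.sign (f t)

/-- A decreasing function `φ : (0,∞) → [0,1]` is `p`-gentle if
`M ^ (2 - p) * φ M ^ p → 0` as `M → ∞`. -/
def IsGentle (p : ℝ) (φ : ℝ → ℝ) : Prop :=
  AntitoneOn φ (Set.Ioi 0) ∧ (∀ M > (0:ℝ), φ M ∈ Set.Icc (0:ℝ) 1) ∧
    Filter.Tendsto (fun M : ℝ => M ^ (2 - p) * φ M ^ p) Filter.atTop (nhds 0)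

/-- `T` is gentle-narrow with gentle function `φ`: for every `ε > 0`, `M > 0` and
measurable `A ⊆ [0,1]` there is `x ∈ L_p(A)` with `‖x‖ = μ(A)^{1/p}`,
`‖x - x^M‖ ≤ φ(M) μ(A)^{1/p}` and `‖T x‖ ≤ ε`. -/
def GentleNarrowWith {X : Type*} [NormedAddCommGroup X] [NormedSpace ℝ X]
    (p : ℝ) [Fact (1 ≤ ENNReal.ofReal p)]
    (T : Lp ℝ (ENNReal.ofReal p) μ01 →L[ℝ] X) (φ : ℝ → ℝ) : Prop :=
  ∀ ε > (0:ℝ), ∀ M > (0:ℝ), ∀ A : Set ℝ, A ⊆ Set.Icc 0 1 → MeasurableSet A →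
    ∃ x : Lp ℝ (ENNReal.ofReal p) μ01,
      (∀ᵐ t ∂μ01, t ∉ A → x t = 0) ∧
      ‖x‖ = (μ01 A).toReal ^ (1 / p) ∧
      (eLpNorm (fun t => x t - trunc (⇑x) M t) (ENNReal.ofReal p) μ01).toReal
        ≤ φ M * (μ01 A).toReal ^ (1 / p) ∧
      ‖T x‖ ≤ ε

open scoped Function

instance : IsFiniteMeasure μ01 := by unfold μ01; infer_instance

instance : NullSingletonClass μ01 := by unfold μ01; infer_instance

lemma abs_sub_trunc {f : ℝ → ℝ} {M : ℝ} (hM : 0 ≤ M) (t : ℝ) :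
    |f t - trunc f M t| = max (|f t| - M) 0 := by
  unfold trunc
  split_ifs with h
  · simp [h]
  · rcases lt_trichotomy (f t) 0 with hneg | hzero | hpos
    · rw [abs_of_neg hneg] at h
      rw [Real.sign_of_neg hneg, abs_of_neg hneg, abs_of_neg (by linarith),
        max_eq_left (by linarith)]
      ring
    · simp [hzero] at h; linarith
    · rw [abs_of_pos hpos] at h
      rw [Real.sign_of_pos hpos, abs_of_pos hpos, abs_of_pos (by linarith),
        max_eq_left (by linarith)]
      ring

lemma Finset.apply_sum_of_unique_ne_zero {ι E F : Type*} [AddCommMonoid E] [AddCommMonoid F]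
    {s : Finset ι} {v : ι → E} (hv : ∀ i ∈ s, ∀ k ∈ s, v i ≠ 0 → v k ≠ 0 → i = k)
    {χ : E → F} (hχ : χ 0 = 0) : χ (∑ i ∈ s, v i) = ∑ i ∈ s, χ (v i) := by
  by_cases h : ∃ k ∈ s, v k ≠ 0
  · obtain ⟨k, hk, hvk⟩ := h
    have hzero : ∀ i ∈ s, i ≠ k → v i = 0 := fun i hi hik =>
      by_contra fun hvi => hik (hv i hi k hk hvi hvk)
    rw [Finset.sum_eq_single_of_mem k hk hzero,
      Finset.sum_eq_single_of_mem k hk fun i hi hik => by rw [hzero i hi hik, hχ]]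
  · simp only [not_exists, not_and, not_not] at h
    rw [Finset.sum_eq_zero h, hχ, Finset.sum_eq_zero fun i hi => by rw [h i hi, hχ]]

lemma norm_sum_eq_of_unique_ne_zero {ι E : Type*} [NormedAddCommGroup E] {s : Finset ι}
    {v x : ι → E} (hx : ∀ i ∈ s, ∀ k ∈ s, x i ≠ 0 → x k ≠ 0 → i = k)
    (hvx : ∀ i ∈ s, ‖v i‖ = ‖x i‖) : ‖∑ i ∈ s, v i‖ = ‖∑ i ∈ s, x i‖ := by
  have hv : ∀ i ∈ s, ∀ k ∈ s, v i ≠ 0 → v k ≠ 0 → i = k := by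
    intro i hi k hk hvi hvk
    rw [← norm_ne_zero_iff, hvx _ hi, norm_ne_zero_iff] at hvi
    rw [← norm_ne_zero_iff, hvx _ hk, norm_ne_zero_iff] at hvk
    exact hx i hi k hk hvi hvk
  rw [Finset.apply_sum_of_unique_ne_zero hv norm_zero,
    Finset.apply_sum_of_unique_ne_zero hx norm_zero]
  exact Finset.sum_congr rfl hvx

lemma ae_unique_ne_zero_of_pairwiseDisjoint {α ι E : Type*} [MeasurableSpace α]
    {μ : Measure α} [Zero E] {s : Finset ι} {B : ι → Set α}
    (hB : (s : Set ι).PairwiseDisjoint B) {f : ι → α → E}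
    (hf : ∀ i ∈ s, ∀ᵐ t ∂μ, t ∉ B i → f i t = 0) :
    ∀ᵐ t ∂μ, ∀ i ∈ s, ∀ k ∈ s, f i t ≠ 0 → f k t ≠ 0 → i = k := by
  filter_upwards [(Filter.eventually_all_finset s).2 hf] with t ht i hi k hk hfi hfk
  by_contra hik
  exact Set.disjoint_left.1 (hB hi hk hik) (not_imp_comm.1 (ht i hi) hfi)
    (not_imp_comm.1 (ht k hk) hfk)

lemma eLpNorm_rpow_toReal_eq_lintegral {α E : Type*} [MeasurableSpace α] {μ : Measure α}
    [NormedAddCommGroup E] {p : ℝ≥0∞} (hp0 : p ≠ 0) (hp : p ≠ ∞) (f : α → E) :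
    eLpNorm f p μ ^ p.toReal = ∫⁻ t, ‖f t‖ₑ ^ p.toReal ∂μ := by
  rw [eLpNorm_eq_lintegral_rpow_enorm_toReal hp0 hp, ← ENNReal.rpow_mul,
    one_div_mul_cancel (ENNReal.toReal_pos hp0 hp).ne', ENNReal.rpow_one]

lemma eLpNorm_comp_sum_rpow_of_unique_ne_zero {α ι E F : Type*} [MeasurableSpace α]
    {μ : Measure α} [NormedAddCommGroup E] [NormedAddCommGroup F] {p : ℝ≥0∞} (hp0 : p ≠ 0)
    (hp : p ≠ ∞) {s : Finset ι} {f : ι → α → E} (hf : ∀ i ∈ s, AEStronglyMeasurable (f i) μ)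
    (hdisj : ∀ᵐ t ∂μ, ∀ i ∈ s, ∀ k ∈ s, f i t ≠ 0 → f k t ≠ 0 → i = k)
    {Φ : E → F} (hΦ : Continuous Φ) (hΦ0 : Φ 0 = 0) :
    eLpNorm (fun t => Φ (∑ i ∈ s, f i t)) p μ ^ p.toReal =
      ∑ i ∈ s, eLpNorm (fun t => Φ (f i t)) p μ ^ p.toReal := by
  simp only [eLpNorm_rpow_toReal_eq_lintegral hp0 hp]
  rw [← lintegral_finsetSum' _ fun i hi =>
    (hΦ.comp_aestronglyMeasurable (hf i hi)).enorm.pow_const _]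
  refine lintegral_congr_ae (hdisj.mono fun t ht => ?_)
  exact Finset.apply_sum_of_unique_ne_zero ht (χ := fun v => ‖Φ v‖ₑ ^ p.toReal)
    (by simp [hΦ0, ENNReal.toReal_pos hp0 hp])

lemma ae_mem_Ioc_μ01 : ∀ᵐ t ∂μ01, t ∈ Ioc (0:ℝ) 1 := by
  filter_upwards [ae_restrict_mem measurableSet_Icc, (Ioc_ae_eq_Icc (μ := μ01)).mem_iff]
    with t ht hiff using hiff.2 ht

lemma exists_setIntegral_Ioc_eq {f : ℝ → ℝ} (hf : Integrable f μ01) {c : ℝ}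
    (hc : c ∈ uIcc 0 (∫ t, f t ∂μ01)) : ∃ r, ∫ t in Ioc 0 r, f t ∂μ01 = c := by
  have hcont : Continuous fun s => ∫ t in (0:ℝ)..s, f t ∂μ01 :=
    intervalIntegral.continuous_primitive (fun _ _ => hf.intervalIntegrable) 0
  have hend : ∫ t in (0:ℝ)..1, f t ∂μ01 = ∫ t, f t ∂μ01 := by
    rw [intervalIntegral.integral_of_le zero_le_one,
      Measure.restrict_eq_self_of_ae_mem ae_mem_Ioc_μ01]
  obtain ⟨r, hr, hrc⟩ := intermediate_value_uIcc (a := 0) (b := 1) hcont.continuousOn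
    (by rwa [intervalIntegral.integral_same, hend])
  rw [uIcc_of_le zero_le_one] at hr
  exact ⟨r, by rwa [← intervalIntegral.integral_of_le hr.1]⟩

noncomputable def flipOutside (r : ℝ) (f : ℝ → ℝ) : ℝ → ℝ := (Ioc 0 r).piecewise f (-f)

lemma abs_flipOutside (r : ℝ) (f : ℝ → ℝ) (t : ℝ) : |flipOutside r f t| = |f t| := by
  unfold flipOutside Set.piecewise
  split_ifs <;> simp

lemma integral_flipOutside {μ : Measure ℝ} {f : ℝ → ℝ} (hf : Integrable f μ) (r : ℝ) :
    ∫ t, flipOutside r f t ∂μ = 2 * ∫ t in Ioc 0 r, f t ∂μ - ∫ t, f t ∂μ := by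
  rw [flipOutside, integral_piecewise measurableSet_Ioc hf.integrableOn hf.neg.integrableOn,
    ← integral_add_compl measurableSet_Ioc hf (s := Ioc 0 r)]
  simp only [Pi.neg_apply, integral_neg]
  ring

lemma exists_integral_flipOutside_eq {f : ℝ → ℝ} (hf : Integrable f μ01) {c : ℝ}
    (hc : |c| ≤ |∫ t, f t ∂μ01|) : ∃ r, ∫ t, flipOutside r f t ∂μ01 = c := by
  set I := ∫ t, f t ∂μ01
  have hmid : (c + I) / 2 ∈ uIcc 0 I := by
    rw [mem_uIcc]
    rcases le_total 0 I with hI | hI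
    · rw [abs_of_nonneg hI, abs_le] at hc
      exact Or.inl ⟨by linarith, by linarith⟩
    · rw [abs_of_nonpos hI, abs_le] at hc
      exact Or.inr ⟨by linarith, by linarith⟩
  obtain ⟨r, hr⟩ := exists_setIntegral_Ioc_eq hf hmid
  exact ⟨r, by rw [integral_flipOutside hf, hr]; ring⟩

lemma abs_add_le_max_of_mul_nonpos {a b : ℝ} (h : a * b ≤ 0) : |a + b| ≤ max |a| |b| := by
  rcases le_total 0 a with ha | ha <;> rcases le_total 0 b with hb | hb
  · have : a = 0 ∨ b = 0 := mul_eq_zero.1 (le_antisymm h (mul_nonneg ha hb))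
    rcases this with rfl | rfl <;> simp
  all_goals
    rw [abs_le]
    constructor <;> cases max_cases |a| |b| <;> cases abs_cases a <;> cases abs_cases b <;>
      nlinarith

lemma exists_signs_abs_sum_mul_le {ι : Type*} [DecidableEq ι] (s : Finset ι) {a : ι → ℝ}
    {C : ℝ} (hC : 0 ≤ C) (ha : ∀ i ∈ s, |a i| ≤ C) :
    ∃ θ : ι → ℝ, (∀ i, |θ i| = 1) ∧ |∑ i ∈ s, θ i * a i| ≤ C := by
  induction s using Finset.induction_on with
  | empty => exact ⟨fun _ => 1, by simp, by simpa⟩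
  | @insert i₀ s hi₀ ih =>
    obtain ⟨θ, hθ, hS⟩ := ih fun i hi => ha i (Finset.mem_insert_of_mem hi)
    set S := ∑ i ∈ s, θ i * a i
    -- the new term gets the sign opposite to `S`, so it cannot increase the maximum
    set θ₀ : ℝ := if 0 ≤ S * a i₀ then -1 else 1
    have hθ₀ : |θ₀| = 1 := by unfold θ₀; split_ifs <;> simp
    have hopp : S * (θ₀ * a i₀) ≤ 0 := by
      unfold θ₀; split_ifs with h <;> nlinarith
    refine ⟨Function.update θ i₀ θ₀, fun i => ?_, ?_⟩
    · rcases eq_or_ne i i₀ with rfl | hi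
      · simpa using hθ₀
      · simpa [hi] using hθ i
    · rw [Finset.sum_insert hi₀, Function.update_self,
        Finset.sum_congr rfl fun i hi =>
          by rw [Function.update_of_ne (ne_of_mem_of_not_mem hi hi₀)],
        add_comm]
      calc |S + θ₀ * a i₀| ≤ max |S| |θ₀ * a i₀| := abs_add_le_max_of_mul_nonpos hopp
        _ ≤ C := by
          rw [abs_mul, hθ₀, one_mul]
          exact max_le hS (ha i₀ (Finset.mem_insert_self _ _))

lemma exists_partition_μ01 {A : Set ℝ} (hA : MeasurableSet A) {n : ℕ} (hn : n ≠ 0) :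
    ∃ B : ℕ → Set ℝ, (∀ i, MeasurableSet (B i)) ∧ (∀ i, B i ⊆ A) ∧ Pairwise (Disjoint on B) ∧
      (∀ i, μ01 (B i) ≤ ENNReal.ofReal (1 / n)) ∧ ∑ i ∈ Finset.range n, μ01 (B i) = μ01 A := by
  set a : ℕ → ℝ := fun i => i / n
  have ha : Monotone a := fun i k h => by simp only [a]; gcongr
  refine ⟨fun i => A ∩ Ioc (a i) (a (i + 1)), fun i => hA.inter measurableSet_Ioc,
    fun i => inter_subset_left, ?_, fun i => ?_, ?_⟩
  · exact ha.pairwise_disjoint_on_Ioc_succ.mono fun i k h =>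
      h.mono inter_subset_right inter_subset_right
  · calc μ01 (A ∩ Ioc (a i) (a (i + 1))) ≤ volume (Ioc (a i) (a (i + 1))) :=
          (measure_mono inter_subset_right).trans (Measure.restrict_le_self _)
      _ = ENNReal.ofReal (1 / n) := by
          rw [Real.volume_Ioc]; congr 1; simp only [a]; push_cast; ring
  · have hsum : ∀ k, ∑ i ∈ Finset.range k, μ01 (A ∩ Ioc (a i) (a (i + 1))) =
        μ01 (A ∩ Ioc 0 (a k)) := by
      intro k
      induction k with
      | zero => simp [a]
      | succ k ih =>
        rw [Finset.sum_range_succ, ih, ← measure_union _ (hA.inter measurableSet_Ioc),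
          ← inter_union_distrib_left, Ioc_union_Ioc_eq_Ioc (by positivity) (ha k.le_succ)]
        exact (Ioc_disjoint_Ioc_of_le le_rfl).mono inter_subset_right inter_subset_right
    rw [hsum, show a n = 1 from div_self (Nat.cast_ne_zero.2 hn),
      measure_inter_conull (ae_iff.1 ae_mem_Ioc_μ01)]

def IsGentleOn (p : ℝ) [Fact (1 ≤ ENNReal.ofReal p)] (φ : ℝ → ℝ) (M : ℝ) (A : Set ℝ)
    (x : Lp ℝ (ENNReal.ofReal p) μ01) : Prop :=
  (∀ᵐ t ∂μ01, t ∉ A → x t = 0) ∧ ‖x‖ = (μ01 A).toReal ^ (1 / p) ∧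
    (eLpNorm (fun t => x t - trunc (⇑x) M t) (ENNReal.ofReal p) μ01).toReal ≤
      φ M * (μ01 A).toReal ^ (1 / p)

lemma GentleNarrowWith.exists_isGentleOn {X : Type*} [NormedAddCommGroup X] [NormedSpace ℝ X]
    {p : ℝ} [Fact (1 ≤ ENNReal.ofReal p)] {T : Lp ℝ (ENNReal.ofReal p) μ01 →L[ℝ] X}
    {φ : ℝ → ℝ} (hT : GentleNarrowWith p T φ) {ε : ℝ} (hε : 0 < ε) {M : ℝ} (hM : 0 < M)
    {A : Set ℝ} (hA : A ⊆ Icc 0 1) (hAm : MeasurableSet A) :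
    ∃ x, IsGentleOn p φ M A x ∧ ‖T x‖ ≤ ε := by
  obtain ⟨x, hvan, hnorm, htrunc, hTx⟩ := hT ε hε M hM A hA hAm
  exact ⟨x, ⟨hvan, hnorm, htrunc⟩, hTx⟩

lemma isGentleOn_iff {p : ℝ} [Fact (1 ≤ ENNReal.ofReal p)] {φ : ℝ → ℝ} {M : ℝ} {A : Set ℝ}
    {x : Lp ℝ (ENNReal.ofReal p) μ01} (hM : 0 ≤ M) (hφ : 0 ≤ φ M) :
    IsGentleOn p φ M A x ↔ (∀ᵐ t ∂μ01, t ∉ A → x t = 0) ∧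
      eLpNorm x (ENNReal.ofReal p) μ01 = μ01 A ^ (1 / p) ∧
      eLpNorm (fun t => max (|x t| - M) 0) (ENNReal.ofReal p) μ01 ≤
        ENNReal.ofReal (φ M) * μ01 A ^ (1 / p) := by
  have hp : 0 ≤ 1 / p := by
    have := ENNReal.one_le_ofReal.1 (Fact.out : 1 ≤ ENNReal.ofReal p); positivity
  have hA : μ01 A ^ (1 / p) ≠ ⊤ := ENNReal.rpow_ne_top_of_nonneg hp (measure_ne_top _ _)
  have habs : ∀ a : ℝ, |max a 0| = max a 0 := fun a => abs_of_nonneg (le_max_right a 0)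
  have hexcess : eLpNorm (fun t => x t - trunc (⇑x) M t) (ENNReal.ofReal p) μ01 =
      eLpNorm (fun t => max (|x t| - M) 0) (ENNReal.ofReal p) μ01 :=
    eLpNorm_congr_norm_ae (ae_of_all _ fun t => by
      simp only [Real.norm_eq_abs, abs_sub_trunc hM, habs])
  have hfin : eLpNorm (fun t => max (|x t| - M) 0) (ENNReal.ofReal p) μ01 ≠ ⊤ :=
    ((eLpNorm_mono fun t => by
      simp only [Real.norm_eq_abs, habs]
      exact max_le (by linarith) (abs_nonneg _)).trans_lt
        (Lp.eLpNorm_lt_top x)).ne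
  refine and_congr Iff.rfl (and_congr ?_ ?_)
  · rw [Lp.norm_def, ENNReal.toReal_rpow, ENNReal.toReal_eq_toReal_iff' (Lp.eLpNorm_ne_top x) hA]
  · rw [hexcess, ← ENNReal.toReal_le_toReal hfin (ENNReal.mul_ne_top ENNReal.ofReal_ne_top hA),
      ENNReal.toReal_mul, ENNReal.toReal_ofReal hφ, ENNReal.toReal_rpow]

lemma ENNReal.mul_rpow_one_div_rpow (a b : ℝ≥0∞) {p : ℝ} (hp : 0 < p) :
    (a * b ^ (1 / p)) ^ p = a ^ p * b := by
  rw [ENNReal.mul_rpow_of_nonneg _ _ hp.le, one_div, ENNReal.rpow_inv_rpow hp.ne']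

lemma IsGentleOn.of_abs_eq_abs_sum {p : ℝ} [Fact (1 ≤ ENNReal.ofReal p)] {φ : ℝ → ℝ} {M : ℝ}
    (hM : 0 ≤ M) (hφ : 0 ≤ φ M) {A : Set ℝ} {ι : Type*} {s : Finset ι} {B : ι → Set ℝ}
    (hB : (s : Set ι).PairwiseDisjoint B) (hBA : ∀ i ∈ s, B i ⊆ A)
    (hμ : ∑ i ∈ s, μ01 (B i) = μ01 A) {x : ι → Lp ℝ (ENNReal.ofReal p) μ01}
    (hx : ∀ i ∈ s, IsGentleOn p φ M (B i) (x i)) {y : Lp ℝ (ENNReal.ofReal p) μ01}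
    (hy : ∀ᵐ t ∂μ01, |y t| = |∑ i ∈ s, x i t|) : IsGentleOn p φ M A y := by
  have hp : 0 < p := by linarith [ENNReal.one_le_ofReal.1 (Fact.out : 1 ≤ ENNReal.ofReal p)]
  simp only [isGentleOn_iff hM hφ] at hx ⊢
  have hdisj := ae_unique_ne_zero_of_pairwiseDisjoint hB fun i hi => (hx i hi).1
  -- the norm and the truncation error of `y` are both `eLpNorm`s of functions of `|y|`
  have key : ∀ Ψ : ℝ → ℝ, Continuous Ψ → Ψ 0 = 0 →
      eLpNorm (fun t => Ψ |y t|) (ENNReal.ofReal p) μ01 ^ p =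
        ∑ i ∈ s, eLpNorm (fun t => Ψ |x i t|) (ENNReal.ofReal p) μ01 ^ p := by
    intro Ψ hΨ hΨ0
    have hsum := eLpNorm_comp_sum_rpow_of_unique_ne_zero (by simpa using hp)
      ENNReal.ofReal_ne_top (fun i _ => Lp.aestronglyMeasurable (x i)) hdisj
      (hΨ.comp continuous_abs) (by simp [hΨ0])
    rw [ENNReal.toReal_ofReal hp.le] at hsum
    rw [eLpNorm_congr_ae (hy.mono fun t ht => by rw [ht])]
    exact hsum
  refine ⟨?_, ?_, ?_⟩
  · filter_upwards [hy, (Filter.eventually_all_finset s).2 fun i hi => (hx i hi).1]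
      with t ht hxt htA
    rw [← abs_eq_zero, ht, Finset.sum_eq_zero fun i hi => hxt i hi fun h => htA (hBA i hi h),
      abs_zero]
  · have hnorm := key id continuous_id rfl
    simp only [id, ← Real.norm_eq_abs, eLpNorm_norm] at hnorm
    refine ENNReal.rpow_left_injective hp.ne' ?_
    calc eLpNorm y (ENNReal.ofReal p) μ01 ^ p
        = ∑ i ∈ s, eLpNorm (x i) (ENNReal.ofReal p) μ01 ^ p := hnorm
      _ = ∑ i ∈ s, μ01 (B i) := Finset.sum_congr rfl fun i hi => by
          rw [(hx i hi).2.1, one_div, ENNReal.rpow_inv_rpow hp.ne']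
      _ = (μ01 A ^ (1 / p)) ^ p := by rw [hμ, one_div, ENNReal.rpow_inv_rpow hp.ne']
  · rw [← ENNReal.rpow_le_rpow_iff hp, key (fun a => max (a - M) 0) (by fun_prop) (by simp [hM]),
      ENNReal.mul_rpow_one_div_rpow _ _ hp, ← hμ, Finset.mul_sum]
    refine Finset.sum_le_sum fun i hi => ?_
    rw [← ENNReal.mul_rpow_one_div_rpow _ _ hp]
    exact ENNReal.rpow_le_rpow (hx i hi).2.2 hp.le

lemma exists_signs_flipOutside_integral_eq_zero {ι : Type*} [DecidableEq ι] {s : Finset ι}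
    (hs : s.Nonempty) {f : ι → ℝ → ℝ} (hf : ∀ i, Integrable (f i) μ01) :
    ∃ j ∈ s, ∃ θ : ι → ℝ, (∀ i, |θ i| = 1) ∧ ∃ r,
      ∑ i ∈ s.erase j, θ i * ∫ t, f i t ∂μ01 + ∫ t, flipOutside r (f j) t ∂μ01 = 0 := by
  obtain ⟨j, hj, hmax⟩ := s.exists_max_image (fun i => |∫ t, f i t ∂μ01|) hs
  obtain ⟨θ, hθ, hS⟩ := exists_signs_abs_sum_mul_le (s.erase j) (abs_nonneg _)
    fun i hi => hmax i (Finset.mem_of_mem_erase hi)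
  obtain ⟨r, hr⟩ := exists_integral_flipOutside_eq (hf j)
    (c := -∑ i ∈ s.erase j, θ i * ∫ t, f i t ∂μ01) (by rwa [abs_neg])
  exact ⟨j, hj, θ, hθ, r, by rw [hr, add_neg_cancel]⟩

lemma exists_signed_sum_integral_eq_zero {p : ℝ≥0∞} [Fact (1 ≤ p)] {ι : Type*} [DecidableEq ι]
    {s : Finset ι} (hs : s.Nonempty) (x : ι → Lp ℝ p μ01)
    (hdisj : ∀ᵐ t ∂μ01, ∀ i ∈ s, ∀ k ∈ s, x i t ≠ 0 → x k t ≠ 0 → i = k) :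
    ∃ j ∈ s, ∃ θ : ι → ℝ, (∀ i, |θ i| = 1) ∧ ∃ y : Lp ℝ p μ01, ‖y‖ = ‖x j‖ ∧
      (∀ᵐ t ∂μ01, |(∑ i ∈ s.erase j, θ i • x i + y) t| = |∑ i ∈ s, x i t|) ∧
      ∫ t, (∑ i ∈ s.erase j, θ i • x i + y) t ∂μ01 = 0 := by
  have hint : ∀ i, Integrable (x i) μ01 := fun i => (Lp.memLp (x i)).integrable Fact.out
  obtain ⟨j, hj, θ, hθ, r, hmean⟩ := exists_signs_flipOutside_integral_eq_zero hs hint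
  have hflip : MemLp (flipOutside r (x j)) p μ01 :=
    (Lp.memLp (x j)).congr_norm
      ((Lp.stronglyMeasurable (x j)).piecewise measurableSet_Ioc
        (Lp.stronglyMeasurable (x j)).neg).aestronglyMeasurable
      (ae_of_all _ fun t => by simp only [Real.norm_eq_abs, abs_flipOutside])
  have hcoe : ⇑(∑ i ∈ s.erase j, θ i • x i + hflip.toLp _) =ᵐ[μ01]
      fun t => ∑ i ∈ s.erase j, θ i * x i t + flipOutside r (x j) t := by
    filter_upwards [Lp.coeFn_add (∑ i ∈ s.erase j, θ i • x i) (hflip.toLp _),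
      Lp.coeFn_fun_finsetSum (s.erase j) (fun i => θ i • x i), hflip.coeFn_toLp,
      (Filter.eventually_all_finset _).2 fun i _ => Lp.coeFn_smul (θ i) (x i)]
      with t h1 h2 h3 h4
    simp only [h1, Pi.add_apply, h2, h3]
    congr 1
    exact Finset.sum_congr rfl fun i hi => by rw [h4 i hi, Pi.smul_apply, smul_eq_mul]
  refine ⟨j, hj, θ, hθ, hflip.toLp _, ?_, ?_, ?_⟩
  · rw [Lp.norm_toLp, Lp.norm_def]
    exact congrArg ENNReal.toReal (eLpNorm_congr_norm_ae (ae_of_all _ fun t => by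
      rw [Real.norm_eq_abs, Real.norm_eq_abs, abs_flipOutside]))
  · filter_upwards [hcoe, hdisj] with t ht hdisj_t
    have hsigned := norm_sum_eq_of_unique_ne_zero hdisj_t
      (v := Function.update (fun i => θ i * x i t) j (flipOutside r (x j) t)) fun i _ => by
        rcases eq_or_ne i j with rfl | hij
        · simp [Real.norm_eq_abs, abs_flipOutside]
        · simp [hij, hθ]
    rw [← Finset.add_sum_erase s _ hj, Function.update_self, Finset.sum_congr rfl fun i hi =>
      Function.update_of_ne (Finset.ne_of_mem_erase hi) _ _] at hsigned
    rw [ht, ← Real.norm_eq_abs, ← Real.norm_eq_abs, ← hsigned, add_comm]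
  · rw [integral_congr_ae hcoe, integral_add
      (integrable_finsetSum _ fun i _ => (hint i).const_mul _) (hflip.integrable Fact.out),
      integral_finsetSum _ fun i _ => (hint i).const_mul _]
    simpa only [integral_const_mul] using hmean

lemma ContinuousLinearMap.norm_map_sum_smul_add_le {E X : Type*} [NormedAddCommGroup E]
    [NormedSpace ℝ E] [NormedAddCommGroup X] [NormedSpace ℝ X] (T : E →L[ℝ] X) {ι : Type*}
    (s : Finset ι) {θ : ι → ℝ} (hθ : ∀ i, |θ i| = 1) {x : ι → E} {y : E} {δ c : ℝ}
    (hx : ∀ i ∈ s, ‖T (x i)‖ ≤ δ) (hy : ‖y‖ ≤ c) :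
    ‖T (∑ i ∈ s, θ i • x i + y)‖ ≤ s.card * δ + ‖T‖ * c := by
  rw [map_add, map_sum, ← nsmul_eq_mul]
  refine (norm_add_le _ _).trans (add_le_add ((norm_sum_le _ _).trans
    (Finset.sum_le_card_nsmul _ _ _ fun i hi => ?_)) ((T.le_opNorm y).trans (by gcongr)))
  rw [map_smul, norm_smul, Real.norm_eq_abs, hθ, one_mul]
  exact hx i hi

lemma IsGentleOn.norm_le {p : ℝ} [Fact (1 ≤ ENNReal.ofReal p)] {φ : ℝ → ℝ} {M : ℝ} {A : Set ℝ}
    {x : Lp ℝ (ENNReal.ofReal p) μ01} (hx : IsGentleOn p φ M A x) {c : ℝ} (hc : 0 ≤ c)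
    (hA : μ01 A ≤ ENNReal.ofReal c) : ‖x‖ ≤ c ^ (1 / p) := by
  have hp : 0 ≤ 1 / p := by
    have := ENNReal.one_le_ofReal.1 (Fact.out : 1 ≤ ENNReal.ofReal p); positivity
  rw [hx.2.1]
  exact Real.rpow_le_rpow ENNReal.toReal_nonneg (ENNReal.toReal_le_of_le_ofReal hc hA) hp

lemma exists_nat_ne_zero_mul_one_div_rpow_le (C : ℝ) {q δ : ℝ} (hq : 0 < q) (hδ : 0 < δ) :
    ∃ n : ℕ, C * (1 / n : ℝ) ^ q ≤ δ ∧ n ≠ 0 := by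
  have : Tendsto (fun n : ℕ => C * (1 / n : ℝ) ^ q) atTop (𝓝 0) := by
    simpa only [Real.zero_rpow hq.ne', mul_zero] using
      (tendsto_one_div_atTop_nhds_zero_nat.rpow_const (Or.inr hq.le)).const_mul C
  exact ((this.eventually (ge_mem_nhds hδ)).and (eventually_ne_atTop 0)).exists

theorem gentle_narrow_mean_zero_general {X : Type*} [NormedAddCommGroup X] [NormedSpace ℝ X]
    (p : ℝ) [Fact (1 ≤ ENNReal.ofReal p)]
    (T : Lp ℝ (ENNReal.ofReal p) μ01 →L[ℝ] X)
    (φ : ℝ → ℝ) (hφ : IsGentle p φ) (hT : GentleNarrowWith p T φ) :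
    ∀ ε > (0:ℝ), ∀ M > (0:ℝ), ∀ A : Set ℝ, A ⊆ Set.Icc 0 1 → MeasurableSet A →
      ∃ x : Lp ℝ (ENNReal.ofReal p) μ01,
        (∀ᵐ t ∂μ01, t ∉ A → x t = 0) ∧
        ‖x‖ = (μ01 A).toReal ^ (1 / p) ∧
        (eLpNorm (fun t => x t - trunc (⇑x) M t) (ENNReal.ofReal p) μ01).toReal
          ≤ φ M * (μ01 A).toReal ^ (1 / p) ∧
        ‖T x‖ ≤ ε ∧
        (∫ t, x t ∂μ01) = 0 := by
  intro ε hε M hM A hA hAm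
  have hp : 0 < 1 / p := one_div_pos.2 <| by
    linarith [ENNReal.one_le_ofReal.1 (Fact.out : 1 ≤ ENNReal.ofReal p)]
  obtain ⟨n, hTn, hn⟩ := exists_nat_ne_zero_mul_one_div_rpow_le ‖T‖ hp (half_pos hε)
  obtain ⟨B, hBm, hBA, hBdisj, hBsmall, hBsum⟩ := exists_partition_μ01 hAm hn
  choose x hx hTx using fun i => hT.exists_isGentleOn (ε := ε / (2 * n)) (by positivity) hM
    ((hBA i).trans hA) (hBm i)
  obtain ⟨j, hj, θ, hθ, y, hy, habs, hmean⟩ := exists_signed_sum_integral_eq_zero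
    (Finset.nonempty_range_iff.2 hn) x
    (ae_unique_ne_zero_of_pairwiseDisjoint (hBdisj.set_pairwise _) fun i _ => (hx i).1)
  obtain ⟨hvan, hnorm, htrunc⟩ := IsGentleOn.of_abs_eq_abs_sum hM.le (hφ.2.1 M hM).1
    (hBdisj.set_pairwise _) (fun i _ => hBA i) hBsum (fun i _ => hx i) habs
  refine ⟨_, hvan, hnorm, htrunc, ?_, hmean⟩
  calc _ ≤ ((Finset.range n).erase j).card * (ε / (2 * n)) + ‖T‖ * (1 / n : ℝ) ^ (1 / p) :=
        T.norm_map_sum_smul_add_le _ hθ (fun i _ => hTx i)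
          (hy ▸ (hx j).norm_le (by positivity) (hBsmall j))
    _ ≤ n * (ε / (2 * n)) + ε / 2 := by
        gcongr
        exact Finset.card_erase_le.trans (Finset.card_range n).le
    _ = ε := by field_simp; ring

/-- Lemma: if `1 < p ≤ 2` and `T : L_p → X` is gentle-narrow with `p`-gentle function `φ`,
then the witness `x` can in addition be chosen of mean zero. -/
theorem gentle_narrow_mean_zero {X : Type*} [NormedAddCommGroup X] [NormedSpace ℝ X]
    [CompleteSpace X]
    (p : ℝ) (hp1 : 1 < p) (hp2 : p ≤ 2) [Fact (1 ≤ ENNReal.ofReal p)]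
    (T : Lp ℝ (ENNReal.ofReal p) μ01 →L[ℝ] X)
    (φ : ℝ → ℝ) (hφ : IsGentle p φ) (hT : GentleNarrowWith p T φ) :
    ∀ ε > (0:ℝ), ∀ M > (0:ℝ), ∀ A : Set ℝ, A ⊆ Set.Icc 0 1 → MeasurableSet A →
      ∃ x : Lp ℝ (ENNReal.ofReal p) μ01,
        (∀ᵐ t ∂μ01, t ∉ A → x t = 0) ∧
        ‖x‖ = (μ01 A).toReal ^ (1 / p) ∧
        (eLpNorm (fun t => x t - trunc (⇑x) M t) (ENNReal.ofReal p) μ01).toReal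
          ≤ φ M * (μ01 A).toReal ^ (1 / p) ∧
        ‖T x‖ ≤ ε ∧
        (∫ t, x t ∂μ01) = 0 :=
  gentle_narrow_mean_zero_general p T φ hφ hT
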